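/- Correctness of the spectroscopy energy game (Theorem 1): Let S = (P, Act, →) be a finite labeled transition system, p, q ∈ P, and e_X ∈ En_∞ an extended energy. Then no HML formula φ with expr(φ) ≤ e_X distinguishes p from q if and only if there is no energy e ∈ ℕ^6 with e ∈ Win_a([p,{q}]_a) in the spectroscopy energy game G△ of S and e ≤ e_X. -/

import Mathlib

/-! ### Energies and energy updates -/

/-- (Finite) energies: vectors in `ℕ^N`. -/
abbrev Energy (N : ℕ) := Fin N → ℕ

/-- Extended energies: vectors in `(ℕ ∪ {∞})^N`. -/
abbrev EnergyE (N : ℕ) := Fin N → ℕ∞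

/-- Embedding of energies into extended energies. -/
def Energy.toE {N : ℕ} (e : Energy N) : EnergyE N := fun k => (e k : ℕ∞)

/-- A component of an energy update: `-1`, `0`, or `min_D`. -/
inductive UpdComp (N : ℕ) : Type where
  | dec : UpdComp N
  | zero : UpdComp N
  | minOf (D : Finset (Fin N)) : UpdComp N
deriving DecidableEq

/-- An energy update: a vector of update components, where a `min_D`
component at index `k` must satisfy `k ∈ D`. -/
structure EnergyUpdate (N : ℕ) : Type where
  comp : Fin N → UpdComp N
  valid : ∀ k D, comp k = UpdComp.minOf D → k ∈ D

open Classical in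
/-- Applying an energy update to an extended energy: component `k` becomes
`e k - 1`, `e k`, or `min_{d ∈ D} e d`; the result is undefined (`none`) if
some component would become negative. -/
noncomputable def applyUpdE {N : ℕ} (e : EnergyE N) (u : EnergyUpdate N) :
    Option (EnergyE N) :=
  if ∀ k, u.comp k = UpdComp.dec → e k ≠ 0 then
    some (fun k =>
      match u.comp k with
      | UpdComp.dec => e k - 1
      | UpdComp.zero => e k
      | UpdComp.minOf D => (insert k D).inf' (Finset.insert_nonempty k D) e)
  else none

open Classical in
/-- Applying an energy update to a (finite) energy. -/
noncomputable def applyUpdN {N : ℕ} (e : Energy N) (u : EnergyUpdate N) :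
    Option (Energy N) :=
  if ∀ k, u.comp k = UpdComp.dec → e k ≠ 0 then
    some (fun k =>
      match u.comp k with
      | UpdComp.dec => e k - 1
      | UpdComp.zero => e k
      | UpdComp.minOf D => (insert k D).inf' (Finset.insert_nonempty k D) e)
  else none

/-! ### Declining energy games -/

/-- A declining `N`-dimensional energy game: positions (partitioned into defender
positions and attacker positions), moves, and a weight function assigning an
energy update to each move. -/
structure EnergyGame (N : ℕ) where
  Pos : Type
  defender : Pos → Prop
  move : Pos → Pos → Prop
  weight : Pos → Pos → EnergyUpdate N

/-- The attacker wins from position `g` with (extended) initial energy budget `e`: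
inductive (attractor) characterization of the existence of an attacker winning
strategy.  (The attacker wins exactly the finite plays that get stuck at a defender
position without the energy having become negative, so the attacker has a winning
strategy iff they can force the play into a stuck defender position in finitely
many steps while keeping all energy levels defined.) -/
inductive AttackerWins {N : ℕ} (G : EnergyGame N) : G.Pos → EnergyE N → Prop where
  | attack {g g' : G.Pos} {e e' : EnergyE N} :
      ¬ G.defender g → G.move g g' →
      applyUpdE e (G.weight g g') = some e' →
      AttackerWins G g' e' → AttackerWins G g e
  | defend {g : G.Pos} {e : EnergyE N} :
      G.defender g →
      (∀ g', G.move g g' → (applyUpdE e (G.weight g g')).isSome) →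
      (∀ g' e', G.move g g' → applyUpdE e (G.weight g g') = some e' →
        AttackerWins G g' e') →
      AttackerWins G g e
/-! ### The spectroscopy energy game -/

/-- Lifting of transition steps to sets of processes:
`stepSet step Q a = {q' | ∃ q ∈ Q, q →a q'}`. -/
def stepSet {P : Type} {Act : Type} (step : P → Act → P → Prop) (Q : Set P) (a : Act) :
    Set P := {q' | ∃ q ∈ Q, step q a q'}

/-- The actions enabled initially for a process `p`: `I(p)`. -/
def enabledActs {P : Type} {Act : Type} (step : P → Act → P → Prop) (p : P) : Set Act :=
  {a | ∃ p', step p a p'}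

/-- Positions of the spectroscopy energy game: attacker positions `[p,Q]_a`,
attacker clause positions `[p,q]_a^∧`, and defender positions `(p,Q,Q*)_d`. -/
inductive SpecPos (P : Type) : Type where
  | att (p : P) (Q : Set P)
  | attConj (p q : P)
  | defp (p : P) (Q Qs : Set P)

/-- Update `(-1,0,0,0,0,0)` of observation moves. -/
def uObs : EnergyUpdate 6 :=
  ⟨![.dec, .zero, .zero, .zero, .zero, .zero], by decide⟩

/-- Update `(0,-1,0,0,0,0)` of conjunction challenges. -/
def uConj : EnergyUpdate 6 :=
  ⟨![.zero, .dec, .zero, .zero, .zero, .zero], by decide⟩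

/-- Update `(min_{1,3},0,0,0,0,0)` of conjunction revivals. -/
def uRevival : EnergyUpdate 6 :=
  ⟨![.minOf {0, 2}, .zero, .zero, .zero, .zero, .zero], by decide⟩

/-- Update `(0,0,0,min_{3,4},0,0)` of conjunction answers. -/
def uAnswer : EnergyUpdate 6 :=
  ⟨![.zero, .zero, .zero, .minOf {2, 3}, .zero, .zero], by decide⟩

/-- Update `(min_{1,4},0,0,0,0,0)` of positive decisions. -/
def uPos : EnergyUpdate 6 :=
  ⟨![.minOf {0, 3}, .zero, .zero, .zero, .zero, .zero], by decide⟩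

/-- Update `(min_{1,5},0,0,0,0,-1)` of negative decisions. -/
def uNeg : EnergyUpdate 6 :=
  ⟨![.minOf {0, 4}, .zero, .zero, .zero, .zero, .dec], by decide⟩

/-- The moves of the spectroscopy energy game `G△`. -/
inductive SpecMove {P : Type} {Act : Type} (step : P → Act → P → Prop) :
    SpecPos P → SpecPos P → Prop where
  | obs {p p' : P} {Q : Set P} {a : Act} :
      step p a p' →
      SpecMove step (.att p Q) (.att p' (stepSet step Q a))
  | conjChallenge {p : P} {Q Qs : Set P} :
      Qs ⊆ Q →
      SpecMove step (.att p Q) (.defp p (Q \ Qs) Qs)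
  | conjRevival {p : P} {Q Qs : Set P} :
      Qs ≠ ∅ →
      SpecMove step (.defp p Q Qs) (.att p Qs)
  | conjAnswer {p q : P} {Q Qs : Set P} :
      q ∈ Q →
      SpecMove step (.defp p Q Qs) (.attConj p q)
  | posDecision {p q : P} :
      SpecMove step (.attConj p q) (.att p {q})
  | negDecision {p q : P} :
      p ≠ q →
      SpecMove step (.attConj p q) (.att q {p})

/-- The moves of the clever spectroscopy game `G▲`: like `SpecMove`, with conjunction
challenges restricted to the four subsets
`∅`, `{q ∈ Q | I(q) ⊆ I(p)}`, `{q ∈ Q | I(p) ⊆ I(q)}`, `{q ∈ Q | I(p) = I(q)}`. -/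
inductive CleverMove {P : Type} {Act : Type} (step : P → Act → P → Prop) :
    SpecPos P → SpecPos P → Prop where
  | obs {p p' : P} {Q : Set P} {a : Act} :
      step p a p' →
      CleverMove step (.att p Q) (.att p' (stepSet step Q a))
  | conjChallenge {p : P} {Q Qs : Set P} :
      (Qs = ∅ ∨
       Qs = {q ∈ Q | enabledActs step q ⊆ enabledActs step p} ∨
       Qs = {q ∈ Q | enabledActs step p ⊆ enabledActs step q} ∨
       Qs = {q ∈ Q | enabledActs step p = enabledActs step q}) →
      CleverMove step (.att p Q) (.defp p (Q \ Qs) Qs)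
  | conjRevival {p : P} {Q Qs : Set P} :
      Qs ≠ ∅ →
      CleverMove step (.defp p Q Qs) (.att p Qs)
  | conjAnswer {p q : P} {Q Qs : Set P} :
      q ∈ Q →
      CleverMove step (.defp p Q Qs) (.attConj p q)
  | posDecision {p q : P} :
      CleverMove step (.attConj p q) (.att p {q})
  | negDecision {p q : P} :
      p ≠ q →
      CleverMove step (.attConj p q) (.att q {p})

open Classical in
/-- The weight function of the spectroscopy energy game (well-defined on all moves). -/
noncomputable def specWeight {P : Type} : SpecPos P → SpecPos P → EnergyUpdate 6
  | .att _ _, .att _ _ => uObs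
  | .att _ _, .defp _ _ _ => uConj
  | .defp _ _ _, .att _ _ => uRevival
  | .defp _ _ _, .attConj _ _ => uAnswer
  | .attConj p _, .att p' _ => if p = p' then uPos else uNeg
  | _, _ => uObs

/-- The spectroscopy energy game `G△` of a labeled transition system. -/
noncomputable def specGame {P : Type} {Act : Type} (step : P → Act → P → Prop) :
    EnergyGame 6 where
  Pos := SpecPos P
  defender g := ∃ p Q Qs, g = SpecPos.defp p Q Qs
  move := SpecMove step
  weight := specWeight

/-- The clever spectroscopy energy game `G▲` of a labeled transition system. -/
noncomputable def cleverGame {P : Type} {Act : Type} (step : P → Act → P → Prop) :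
    EnergyGame 6 where
  Pos := SpecPos P
  defender g := ∃ p Q Qs, g = SpecPos.defp p Q Qs
  move := CleverMove step
  weight := specWeight
/-! ### Hennessy–Milner logic -/

/-- Hennessy–Milner logic over actions `Act`: observations `⟨a⟩φ` and finite
conjunctions `⋀ {ψ_i}` whose clauses are positive (`poss`) or negated (`negs`)
formulas. -/
inductive HML (Act : Type) : Type where
  | obs (a : Act) (φ : HML Act)
  | conj (poss : List (HML Act)) (negs : List (HML Act))

/-- HML semantics: `HML.sat step φ p` means `p ⊨ φ`. -/
def HML.sat {P : Type} {Act : Type} (step : P → Act → P → Prop) :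
    HML Act → P → Prop
  | .obs a φ, p => ∃ p', step p a p' ∧ HML.sat step φ p'
  | .conj poss negs, p =>
      (∀ φ ∈ poss, HML.sat step φ p) ∧ (∀ φ ∈ negs, ¬ HML.sat step φ p)

/-- `φ` distinguishes `p` from `q`: `p ⊨ φ` and `q ⊭ φ`. -/
def distinguishes {P : Type} {Act : Type} (step : P → Act → P → Prop)
    (φ : HML Act) (p q : P) : Prop :=
  φ.sat step p ∧ ¬ φ.sat step q

/-- Maximum (supremum) of a list of naturals, `0` for the empty list. -/
def listMax (l : List ℕ) : ℕ := l.foldr max 0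

/-- Supremum of a list of naturals after removing one maximal element
(the "other positive clauses" in the pricing). -/
def supErase (l : List ℕ) : ℕ := listMax (l.erase (listMax l))

mutual
/-- The expressiveness price `expr : HML → ℕ^6` of a formula.
Components (0-indexed): 0 — modal depth; 1 — nesting depth of conjunctions;
2 — modal depth of the deepest positive clauses; 3 — modal depth of the other
positive clauses; 4 — modal depth of negative clauses; 5 — nesting depth of
negations. -/
def HML.expr {Act : Type} : HML Act → Energy 6
  | .obs _ φ => fun k => HML.expr φ k + (if k = 0 then 1 else 0)
  | .conj poss negs =>
      let pe := exprList poss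
      let ne := exprList negs
      -- prices of the clauses (a negated clause adds 1 to component 5)
      let clauseE : List (Energy 6) :=
        pe ++ ne.map (fun v => fun k => v k + (if k = 5 then 1 else 0))
      let base : Energy 6 := fun k =>
        if k = 1 then 1 + listMax (clauseE.map (fun v => v 1))
        else if k = 2 then listMax (pe.map (fun v => v 0))
        else if k = 3 then supErase (pe.map (fun v => v 0))
        else if k = 4 then listMax (ne.map (fun v => v 0))
        else 0
      fun k => max (base k) (listMax (clauseE.map (fun v => v k)))

/-- Prices of a list of formulas. -/
def exprList {Act : Type} : List (HML Act) → List (Energy 6)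
  | [] => []
  | φ :: l => HML.expr φ :: exprList l
end

/-- The expressiveness price as an extended energy. -/
def HML.exprE {Act : Type} (φ : HML Act) : EnergyE 6 := (HML.expr φ).toE

/-! ### Auxiliary lemmas -/

section ListMax

lemma listMax_cons (a : ℕ) (l : List ℕ) : listMax (a :: l) = max a (listMax l) := rfl

lemma listMax_le_iff {l : List ℕ} {c : ℕ} : listMax l ≤ c ↔ ∀ a ∈ l, a ≤ c := by
  induction l with
  | nil => simp [listMax]
  | cons a l ih => simp [listMax_cons, ih]

lemma le_listMax_of_mem {l : List ℕ} {a : ℕ} (h : a ∈ l) : a ≤ listMax l := by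
  induction l with
  | nil => simp at h
  | cons b l ih =>
    rcases List.mem_cons.1 h with rfl | h
    · exact le_max_left _ _
    · exact le_trans (ih h) (le_max_right _ _)

lemma listMax_mem_or_zero (l : List ℕ) : listMax l ∈ l ∨ listMax l = 0 := by
  induction l with
  | nil => simp [listMax]
  | cons a l ih =>
    rw [listMax_cons]
    rcases le_total a (listMax l) with h | h
    · rw [max_eq_right h]
      rcases ih with h' | h'
      · exact Or.inl (List.mem_cons_of_mem _ h')
      · exact Or.inr h'
    · rw [max_eq_left h]
      exact Or.inl (List.mem_cons_self)

lemma supErase_le_listMax (l : List ℕ) : supErase l ≤ listMax l := by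
  rw [supErase, listMax_le_iff]
  intro a ha
  exact le_listMax_of_mem (List.mem_of_mem_erase ha)

lemma supErase_cons_le {l : List ℕ} {c : ℕ} (a : ℕ) (h : ∀ b ∈ l, b ≤ c) :
    supErase (a :: l) ≤ c := by
  by_cases ha : a = listMax (a :: l)
  · rw [supErase, ← ha, List.erase_cons_head, listMax_le_iff]
    exact h
  · have h1 : listMax (a :: l) ≤ c := by
      rw [listMax_cons] at ha ⊢
      rcases max_choice a (listMax l) with hm | hm
      · exact absurd hm.symm ha
      · rw [hm]; exact listMax_le_iff.2 h
    exact le_trans (supErase_le_listMax _) h1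

/-- If `b` is a member of `l` different (as an element occurrence) from a maximal
member `a`, then `b ≤ supErase l`. -/
lemma le_supErase_of_mem_erase {l : List ℕ} {b : ℕ} (h : b ∈ l.erase (listMax l)) :
    b ≤ supErase l := le_listMax_of_mem h

end ListMax

lemma listMax_lt_iff {l : List ℕ} {c : ℕ} (hc : 0 < c) :
    listMax l < c ↔ ∀ a ∈ l, a < c := by
  induction l with
  | nil => simpa [listMax]
  | cons a l ih => simp [listMax_cons, ih, Nat.max_lt]
section ExprConj

variable {Act : Type}

/-- Price adjustment for a negated clause. -/
def negAdj (v : Energy 6) : Energy 6 := fun k => v k + if k = 5 then 1 else 0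

/-- The clause prices of a conjunction. -/
def clE (poss negs : List (HML Act)) : List (Energy 6) :=
  poss.map HML.expr ++ (negs.map HML.expr).map negAdj

lemma exprList_eq (l : List (HML Act)) : exprList l = l.map HML.expr := by
  induction l with
  | nil => simp [exprList]
  | cons φ l ih => simp [exprList, ih]

lemma expr_conj (poss negs : List (HML Act)) (k : Fin 6) :
    HML.expr (.conj poss negs) k =
      max (if k = 1 then 1 + listMax ((clE poss negs).map (fun v => v 1))
        else if k = 2 then listMax ((poss.map HML.expr).map (fun v => v 0))
        else if k = 3 then supErase ((poss.map HML.expr).map (fun v => v 0))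
        else if k = 4 then listMax ((negs.map HML.expr).map (fun v => v 0))
        else 0)
      (listMax ((clE poss negs).map (fun v => v k))) := by
  simp only [HML.expr, exprList_eq, clE, negAdj]
  rfl

lemma mem_clE {v : Energy 6} {poss negs : List (HML Act)} :
    v ∈ clE poss negs ↔
      (∃ ψ ∈ poss, v = HML.expr ψ) ∨ (∃ ψ ∈ negs, v = negAdj (HML.expr ψ)) := by
  simp only [clE, List.mem_append, List.mem_map]
  constructor
  · rintro (⟨ψ, h, rfl⟩ | ⟨w, ⟨ψ, h, rfl⟩, rfl⟩)
    · exact Or.inl ⟨ψ, h, rfl⟩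
    · exact Or.inr ⟨ψ, h, rfl⟩
  · rintro (⟨ψ, h, rfl⟩ | ⟨ψ, h, rfl⟩)
    · exact Or.inl ⟨ψ, h, rfl⟩
    · exact Or.inr ⟨HML.expr ψ, ⟨ψ, h, rfl⟩, rfl⟩

lemma le_expr_conj_of_pos {ψ : HML Act} {poss negs : List (HML Act)} (h : ψ ∈ poss)
    (k : Fin 6) : HML.expr ψ k ≤ HML.expr (.conj poss negs) k := by
  rw [expr_conj]
  refine le_trans ?_ (le_max_right _ _)
  exact le_listMax_of_mem (List.mem_map.2 ⟨_, mem_clE.2 (Or.inl ⟨ψ, h, rfl⟩), rfl⟩)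

lemma le_expr_conj_of_neg {ψ : HML Act} {poss negs : List (HML Act)} (h : ψ ∈ negs)
    (k : Fin 6) :
    HML.expr ψ k + (if k = 5 then 1 else 0) ≤ HML.expr (.conj poss negs) k := by
  rw [expr_conj]
  refine le_trans ?_ (le_max_right _ _)
  exact le_listMax_of_mem (List.mem_map.2 ⟨_, mem_clE.2 (Or.inr ⟨ψ, h, rfl⟩), rfl⟩)

lemma expr_conj_one_clause {ψ : HML Act} {poss negs : List (HML Act)}
    (h : ψ ∈ poss ∨ ψ ∈ negs) :
    HML.expr ψ 1 + 1 ≤ HML.expr (.conj poss negs) 1 := by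
  rw [expr_conj]
  refine le_trans ?_ (le_max_left _ _)
  rw [if_pos rfl]
  have hL : HML.expr ψ 1 ≤ listMax ((clE poss negs).map (fun v => v 1)) := by
    rcases h with h | h
    · exact le_listMax_of_mem (List.mem_map.2 ⟨_, mem_clE.2 (Or.inl ⟨ψ, h, rfl⟩), rfl⟩)
    · have he : negAdj (HML.expr ψ) 1 = HML.expr ψ 1 := by simp [negAdj]
      refine le_trans (le_of_eq he.symm) ?_
      exact le_listMax_of_mem (List.mem_map.2 ⟨_, mem_clE.2 (Or.inr ⟨ψ, h, rfl⟩), rfl⟩)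
  calc HML.expr ψ 1 + 1 ≤ listMax ((clE poss negs).map (fun v => v 1)) + 1 :=
        Nat.add_le_add_right hL 1
    _ = 1 + listMax ((clE poss negs).map (fun v => v 1)) := Nat.add_comm _ _

lemma expr_conj_one_pos (poss negs : List (HML Act)) :
    1 ≤ HML.expr (.conj poss negs) 1 := by
  rw [expr_conj]
  refine le_trans ?_ (le_max_left _ _)
  rw [if_pos rfl]
  exact Nat.le_add_right 1 _

lemma expr_conj_two_clause {ψ : HML Act} {poss negs : List (HML Act)} (h : ψ ∈ poss) :
    HML.expr ψ 0 ≤ HML.expr (.conj poss negs) 2 := by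
  rw [expr_conj]
  refine le_trans ?_ (le_max_left _ _)
  rw [if_neg (by decide), if_pos rfl]
  exact le_listMax_of_mem (List.mem_map.2 ⟨HML.expr ψ, List.mem_map.2 ⟨ψ, h, rfl⟩, rfl⟩)

lemma expr_conj_four_clause {ψ : HML Act} {poss negs : List (HML Act)} (h : ψ ∈ negs) :
    HML.expr ψ 0 ≤ HML.expr (.conj poss negs) 4 := by
  rw [expr_conj]
  refine le_trans ?_ (le_max_left _ _)
  rw [if_neg (by decide), if_neg (by decide), if_neg (by decide), if_pos rfl]
  exact le_listMax_of_mem (List.mem_map.2 ⟨HML.expr ψ, List.mem_map.2 ⟨ψ, h, rfl⟩, rfl⟩)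

lemma expr_conj_three (poss negs : List (HML Act)) :
    supErase ((poss.map HML.expr).map (fun v => v 0)) ≤ HML.expr (.conj poss negs) 3 := by
  rw [expr_conj]
  refine le_trans ?_ (le_max_left _ _)
  rw [if_neg (by decide), if_neg (by decide), if_pos rfl]

/-- Upper bound on the price of a conjunction. -/
lemma expr_conj_le {poss negs : List (HML Act)} {E : Energy 6} (hE1 : 1 ≤ E 1)
    (hp : ∀ ψ ∈ poss, HML.expr ψ 0 ≤ E 0 ∧ HML.expr ψ 0 ≤ E 2 ∧ HML.expr ψ 1 < E 1 ∧
      HML.expr ψ 2 ≤ E 2 ∧ HML.expr ψ 3 ≤ E 3 ∧ HML.expr ψ 4 ≤ E 4 ∧ HML.expr ψ 5 ≤ E 5)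
    (hp3 : ∀ ψ ∈ poss.tail, HML.expr ψ 0 ≤ E 3)
    (hn : ∀ ψ ∈ negs, HML.expr ψ 0 ≤ E 0 ∧ HML.expr ψ 0 ≤ E 4 ∧ HML.expr ψ 1 < E 1 ∧
      HML.expr ψ 2 ≤ E 2 ∧ HML.expr ψ 3 ≤ E 3 ∧ HML.expr ψ 4 ≤ E 4 ∧
      HML.expr ψ 5 + 1 ≤ E 5) :
    ∀ k, HML.expr (.conj poss negs) k ≤ E k := by
  have hcl : ∀ v ∈ clE poss negs, v 0 ≤ E 0 ∧ v 1 < E 1 ∧ v 2 ≤ E 2 ∧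
      v 3 ≤ E 3 ∧ v 4 ≤ E 4 ∧ v 5 ≤ E 5 := by
    intro v hv
    rcases mem_clE.1 hv with ⟨ψ, h, rfl⟩ | ⟨ψ, h, rfl⟩
    · obtain ⟨h0, _, h1, h2, h3, h4, h5⟩ := hp ψ h
      exact ⟨h0, h1, h2, h3, h4, h5⟩
    · obtain ⟨h0, _, h1, h2, h3, h4, h5⟩ := hn ψ h
      exact ⟨h0, h1, h2, h3, h4, h5⟩
  have hclmax : ∀ k : Fin 6, listMax ((clE poss negs).map (fun v => v k)) ≤ E k := by
    intro k
    rw [listMax_le_iff]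
    rintro a ha
    obtain ⟨v, hv, rfl⟩ := List.mem_map.1 ha
    obtain ⟨h0, h1, h2, h3, h4, h5⟩ := hcl v hv
    fin_cases k
    exacts [h0, le_of_lt h1, h2, h3, h4, h5]
  intro k
  rw [expr_conj]
  refine max_le ?_ (hclmax k)
  split_ifs with h1 h2 h3 h4
  · subst h1
    have hlt : listMax ((clE poss negs).map (fun v => v 1)) < E 1 := by
      rw [listMax_lt_iff (lt_of_lt_of_le Nat.zero_lt_one hE1)]
      rintro a ha
      obtain ⟨v, hv, rfl⟩ := List.mem_map.1 ha
      exact (hcl v hv).2.1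
    calc 1 + listMax ((clE poss negs).map (fun v => v 1))
        = listMax ((clE poss negs).map (fun v => v 1)) + 1 := Nat.add_comm _ _
      _ ≤ E 1 := hlt
  · subst h2
    rw [listMax_le_iff]
    rintro a ha
    obtain ⟨v, hv, rfl⟩ := List.mem_map.1 ha
    obtain ⟨ψ, h, rfl⟩ := List.mem_map.1 hv
    exact (hp ψ h).2.1
  · subst h3
    cases poss with
    | nil => simp [supErase, listMax]
    | cons ψ0 rest =>
      simp only [List.map_cons]
      refine supErase_cons_le _ ?_
      rintro b hb
      obtain ⟨v, hv, rfl⟩ := List.mem_map.1 hb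
      obtain ⟨ψ, h, rfl⟩ := List.mem_map.1 hv
      exact hp3 ψ h
  · subst h4
    rw [listMax_le_iff]
    rintro a ha
    obtain ⟨v, hv, rfl⟩ := List.mem_map.1 ha
    obtain ⟨ψ, h, rfl⟩ := List.mem_map.1 hv
    exact (hn ψ h).2.1
  · exact Nat.zero_le _

end ExprConj
section Updates

/-- The canonical result of applying an update (when defined). -/
def updRes {N : ℕ} (e : Energy N) (u : EnergyUpdate N) : Energy N := fun k =>
  match u.comp k with
  | UpdComp.dec => e k - 1
  | UpdComp.zero => e k
  | UpdComp.minOf D => (insert k D).inf' (Finset.insert_nonempty k D) e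

open Classical in
lemma applyUpdN_eq {N : ℕ} (e : Energy N) (u : EnergyUpdate N) :
    applyUpdN e u = if (∀ k, u.comp k = UpdComp.dec → e k ≠ 0)
      then some (updRes e u) else none := by
  unfold applyUpdN updRes
  congr

lemma cast_inf' {α : Type*} (s : Finset α) (hs : s.Nonempty) (f : α → ℕ) :
    ((s.inf' hs f : ℕ) : ℕ∞) = s.inf' hs (fun a => (f a : ℕ∞)) := by
  induction hs using Finset.Nonempty.cons_induction with
  | singleton a => simp
  | cons a s ha hs ih =>
    rw [Finset.inf'_cons, Finset.inf'_cons, ← ih]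
    exact Monotone.map_min (fun x y h => by exact_mod_cast h)
    exact hs

lemma applyUpdE_toE {N : ℕ} (e : Energy N) (u : EnergyUpdate N) :
    applyUpdE e.toE u = (applyUpdN e u).map Energy.toE := by
  rw [applyUpdN_eq]
  unfold applyUpdE
  have hcond : (∀ k, u.comp k = UpdComp.dec → e.toE k ≠ 0) ↔
      (∀ k, u.comp k = UpdComp.dec → e k ≠ 0) := by
    refine forall_congr' fun k => imp_congr_right fun _ => ?_
    simp [Energy.toE]
  by_cases h : ∀ k, u.comp k = UpdComp.dec → e k ≠ 0
  · rw [if_pos (hcond.2 h), if_pos h, Option.map_some]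
    congr 1
    funext k
    rcases hu : u.comp k with _ | _ | D
    · simp only [hu, Energy.toE, updRes]
      rw [ENat.coe_sub]
      norm_num
    · simp only [hu, Energy.toE, updRes]
    · simp only [hu, Energy.toE, updRes]
      exact (cast_inf' _ _ _).symm
  · rw [if_neg (fun H => h (hcond.1 H)), if_neg h, Option.map_none]

lemma applyUpdN_mono {N : ℕ} {e f : Energy N} (hef : e ≤ f) {u : EnergyUpdate N}
    {e' : Energy N} (h : applyUpdN e u = some e') :
    ∃ f', applyUpdN f u = some f' ∧ e' ≤ f' := by
  rw [applyUpdN_eq] at h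
  by_cases hc : ∀ k, u.comp k = UpdComp.dec → e k ≠ 0
  · rw [if_pos hc] at h
    obtain rfl := Option.some.inj h
    refine ⟨updRes f u, ?_, ?_⟩
    · rw [applyUpdN_eq, if_pos]
      intro k hk
      exact fun h0 => hc k hk (Nat.le_antisymm (h0 ▸ hef k) (Nat.zero_le _))
    · intro k
      unfold updRes
      rcases hu : u.comp k with _ | _ | D <;> simp only [hu]
      · exact Nat.sub_le_sub_right (hef k) 1
      · exact hef k
      · refine Finset.le_inf' _ _ fun b hb => le_trans (Finset.inf'_le _ hb) (hef b)
  · rw [if_neg hc] at h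
    exact absurd h (by simp)

theorem AttackerWins.mono {N : ℕ} {G : EnergyGame N} {g : G.Pos} {a b : Energy N}
    (h : AttackerWins G g a.toE) (hab : a ≤ b) : AttackerWins G g b.toE := by
  have H : ∀ (g : G.Pos) (e : EnergyE N), AttackerWins G g e →
      ∀ a : Energy N, e = a.toE → ∀ b, a ≤ b → AttackerWins G g b.toE := by
    intro g e h
    induction h with
    | @attack g g' e e' hdef hmove hupd _ ih =>
      intro a he b hab
      subst he
      rw [applyUpdE_toE] at hupd
      obtain ⟨a', ha', he'⟩ := Option.map_eq_some_iff.1 hupd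
      obtain ⟨b', hb', hab'⟩ := applyUpdN_mono hab ha'
      exact AttackerWins.attack hdef hmove
        (by rw [applyUpdE_toE, hb', Option.map_some]) (ih a' he'.symm b' hab')
    | @defend g e hdef hall _ ih =>
      intro a he b hab
      subst he
      refine AttackerWins.defend hdef ?_ ?_
      · intro g' hm
        have := hall g' hm
        rw [applyUpdE_toE] at this
        obtain ⟨a', ha'⟩ := Option.isSome_iff_exists.1 this
        obtain ⟨a'', ha'', _⟩ := Option.map_eq_some_iff.1 ha'
        obtain ⟨b', hb', _⟩ := applyUpdN_mono hab ha''
        rw [applyUpdE_toE, hb']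
        simp
      · intro g' e' hm hupd
        have hs := hall g' hm
        rw [applyUpdE_toE] at hs
        obtain ⟨oa, hoa⟩ := Option.isSome_iff_exists.1 hs
        obtain ⟨a'', ha'', hoa'⟩ := Option.map_eq_some_iff.1 hoa
        obtain ⟨b', hb', hab'⟩ := applyUpdN_mono hab ha''
        rw [applyUpdE_toE, hb', Option.map_some] at hupd
        obtain rfl := Option.some.inj hupd
        exact ih g' _ hm (by rw [applyUpdE_toE, ha'', Option.map_some]) a'' rfl b' hab'
  exact H g _ h a rfl b hab

end Updates
section UpdateComps

/-- Result of the observation update. -/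
def dObs (e : Energy 6) : Energy 6 := fun k => if k = 0 then e 0 - 1 else e k
/-- Result of the conjunction-challenge update. -/
def dCnj (e : Energy 6) : Energy 6 := fun k => if k = 1 then e 1 - 1 else e k
/-- Result of the revival update. -/
def dRev (e : Energy 6) : Energy 6 := fun k => if k = 0 then min (e 0) (e 2) else e k
/-- Result of the answer update. -/
def dAns (e : Energy 6) : Energy 6 := fun k => if k = 3 then min (e 2) (e 3) else e k
/-- Result of the positive-decision update. -/
def dPos (e : Energy 6) : Energy 6 := fun k => if k = 0 then min (e 0) (e 3) else e k
/-- Result of the negative-decision update. -/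
def dNeg (e : Energy 6) : Energy 6 := fun k =>
  if k = 0 then min (e 0) (e 4) else if k = 5 then e 5 - 1 else e k

lemma updRes_uObs (e : Energy 6) : updRes e uObs = dObs e := by
  funext k; unfold updRes uObs dObs; fin_cases k <;> rfl

lemma updRes_uConj (e : Energy 6) : updRes e uConj = dCnj e := by
  funext k; unfold updRes uConj dCnj; fin_cases k <;> rfl

lemma updRes_uRevival (e : Energy 6) : updRes e uRevival = dRev e := by
  funext k; unfold updRes uRevival dRev; fin_cases k <;> rfl

lemma updRes_uAnswer (e : Energy 6) : updRes e uAnswer = dAns e := by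
  funext k; unfold updRes uAnswer dAns; fin_cases k <;> rfl

lemma updRes_uPos (e : Energy 6) : updRes e uPos = dPos e := by
  funext k; unfold updRes uPos dPos; fin_cases k <;> rfl

lemma updRes_uNeg (e : Energy 6) : updRes e uNeg = dNeg e := by
  funext k; unfold updRes uNeg dNeg; fin_cases k <;> rfl

lemma cond_uObs (e : Energy 6) :
    (∀ k, uObs.comp k = UpdComp.dec → e k ≠ 0) ↔ e 0 ≠ 0 := by
  constructor
  · exact fun H => H 0 rfl
  · intro h k
    fin_cases k
    · exact fun _ => h
    all_goals exact fun hk => absurd hk (by decide)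

lemma cond_uConj (e : Energy 6) :
    (∀ k, uConj.comp k = UpdComp.dec → e k ≠ 0) ↔ e 1 ≠ 0 := by
  constructor
  · exact fun H => H 1 rfl
  · intro h k
    fin_cases k
    · exact fun hk => absurd hk (by decide)
    · exact fun _ => h
    all_goals exact fun hk => absurd hk (by decide)

lemma cond_uNeg (e : Energy 6) :
    (∀ k, uNeg.comp k = UpdComp.dec → e k ≠ 0) ↔ e 5 ≠ 0 := by
  constructor
  · exact fun H => H 5 rfl
  · intro h k
    fin_cases k
    · exact fun hk => absurd hk (by decide)
    · exact fun hk => absurd hk (by decide)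
    · exact fun hk => absurd hk (by decide)
    · exact fun hk => absurd hk (by decide)
    · exact fun hk => absurd hk (by decide)
    · exact fun _ => h

lemma cond_uRevival (e : Energy 6) (k : Fin 6) (hk : uRevival.comp k = UpdComp.dec) :
    e k ≠ 0 := by fin_cases k <;> exact absurd hk (by decide)

lemma cond_uAnswer (e : Energy 6) (k : Fin 6) (hk : uAnswer.comp k = UpdComp.dec) :
    e k ≠ 0 := by fin_cases k <;> exact absurd hk (by decide)

lemma cond_uPos (e : Energy 6) (k : Fin 6) (hk : uPos.comp k = UpdComp.dec) :
    e k ≠ 0 := by fin_cases k <;> exact absurd hk (by decide)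

lemma applyUpdN_uObs (e : Energy 6) :
    applyUpdN e uObs = if e 0 ≠ 0 then some (dObs e) else none := by
  rw [applyUpdN_eq, updRes_uObs]
  exact if_congr (cond_uObs e) rfl rfl

lemma applyUpdN_uConj (e : Energy 6) :
    applyUpdN e uConj = if e 1 ≠ 0 then some (dCnj e) else none := by
  rw [applyUpdN_eq, updRes_uConj]
  exact if_congr (cond_uConj e) rfl rfl

lemma applyUpdN_uNeg (e : Energy 6) :
    applyUpdN e uNeg = if e 5 ≠ 0 then some (dNeg e) else none := by
  rw [applyUpdN_eq, updRes_uNeg]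
  exact if_congr (cond_uNeg e) rfl rfl

lemma applyUpdN_uRevival (e : Energy 6) : applyUpdN e uRevival = some (dRev e) := by
  rw [applyUpdN_eq, updRes_uRevival, if_pos (cond_uRevival e)]

lemma applyUpdN_uAnswer (e : Energy 6) : applyUpdN e uAnswer = some (dAns e) := by
  rw [applyUpdN_eq, updRes_uAnswer, if_pos (cond_uAnswer e)]

lemma applyUpdN_uPos (e : Energy 6) : applyUpdN e uPos = some (dPos e) := by
  rw [applyUpdN_eq, updRes_uPos, if_pos (cond_uPos e)]

end UpdateComps

section GameFacts

variable {P Act : Type} {step : P → Act → P → Prop}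

lemma specGame_not_def_att (p : P) (Q : Set P) :
    ¬ (specGame step).defender (SpecPos.att p Q) := by
  rintro ⟨_, _, _, h⟩
  cases h

lemma specGame_not_def_attConj (p q : P) :
    ¬ (specGame step).defender (SpecPos.attConj p q) := by
  rintro ⟨_, _, _, h⟩
  cases h

lemma specGame_def_defp (p : P) (Q Qs : Set P) :
    (specGame step).defender (SpecPos.defp p Q Qs) := ⟨p, Q, Qs, rfl⟩

lemma specWeight_posDec (p q p' : P) (Q : Set P) (h : p = p') :
    specWeight (P := P) (SpecPos.attConj p q) (SpecPos.att p' Q) = uPos := by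
  simp [specWeight, h]

lemma specWeight_negDec (p q p' : P) (Q : Set P) (h : p ≠ p') :
    specWeight (P := P) (SpecPos.attConj p q) (SpecPos.att p' Q) = uNeg := by
  simp [specWeight, h]

end GameFacts
section Dir1Helpers

variable {Act : Type}

lemma expr_obs (a : Act) (ψ : HML Act) (k : Fin 6) :
    HML.expr (.obs a ψ) k = HML.expr ψ k + (if k = 0 then 1 else 0) := by
  simp only [HML.expr]

lemma le_energy_of_components {v w : Energy 6} (h0 : v 0 ≤ w 0) (h1 : v 1 ≤ w 1)
    (h2 : v 2 ≤ w 2) (h3 : v 3 ≤ w 3) (h4 : v 4 ≤ w 4) (h5 : v 5 ≤ w 5) : v ≤ w := by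
  intro k
  fin_cases k
  exacts [h0, h1, h2, h3, h4, h5]

lemma exists_max_depth {poss : List (HML Act)} (h : poss ≠ []) :
    ∃ ψr ∈ poss, HML.expr ψr 0 = listMax ((poss.map HML.expr).map (fun v => v 0)) := by
  rcases listMax_mem_or_zero ((poss.map HML.expr).map (fun v => v 0)) with hm | h0
  · obtain ⟨v, hv, hval⟩ := List.mem_map.1 hm
    obtain ⟨ψ, hψ, rfl⟩ := List.mem_map.1 hv
    exact ⟨ψ, hψ, hval⟩
  · cases poss with
    | nil => exact absurd rfl h
    | cons φ rest =>
      refine ⟨φ, List.mem_cons_self, ?_⟩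
      have hle : HML.expr φ 0 ≤ listMax (((φ :: rest).map HML.expr).map (fun v => v 0)) :=
        le_listMax_of_mem (List.mem_map.2 ⟨_, List.mem_map.2 ⟨φ, List.mem_cons_self, rfl⟩, rfl⟩)
      rw [h0] at hle ⊢
      exact (Nat.le_zero.1 hle).symm ▸ rfl

lemma le_supErase_of_ne {poss : List (HML Act)} {ψr ψ : HML Act} (hr : ψr ∈ poss)
    (hmax : HML.expr ψr 0 = listMax ((poss.map HML.expr).map (fun v => v 0)))
    (hψ : ψ ∈ poss) (hne : ψ ≠ ψr) :
    HML.expr ψ 0 ≤ supErase ((poss.map HML.expr).map (fun v => v 0)) := by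
  classical
  set l := (poss.map HML.expr).map (fun v => v 0) with hl
  rw [supErase]
  by_cases hd : HML.expr ψ 0 = listMax l
  · have hperm : poss.Perm (ψ :: poss.erase ψ) := List.perm_cons_erase hψ
    have hr' : ψr ∈ poss.erase ψ := (List.mem_erase_of_ne (fun h => hne h.symm)).2 hr
    have hlperm : l.Perm (HML.expr ψ 0 ::
        ((poss.erase ψ).map HML.expr).map (fun v => v 0)) := by
      rw [hl]
      exact (hperm.map HML.expr).map _
    have hm_mem : listMax l ∈ l.erase (listMax l) := by
      rw [← hd]
      have h1 : l.erase (HML.expr ψ 0) |>.Perm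
          (((poss.erase ψ).map HML.expr).map (fun v => v 0)) := by
        have := hlperm.erase (HML.expr ψ 0)
        rwa [List.erase_cons_head] at this
      rw [h1.mem_iff, hd, ← hmax]
      exact List.mem_map.2 ⟨_, List.mem_map.2 ⟨ψr, hr', rfl⟩, rfl⟩
    rw [hd]
    exact le_listMax_of_mem hm_mem
  · refine le_listMax_of_mem ((List.mem_erase_of_ne hd).2 ?_)
    exact List.mem_map.2 ⟨_, List.mem_map.2 ⟨ψ, hψ, rfl⟩, rfl⟩

lemma expr_three_le_two (φ : HML Act) : HML.expr φ 3 ≤ HML.expr φ 2 := by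
  suffices H : ∀ (n : ℕ) (φ : HML Act), sizeOf φ ≤ n → HML.expr φ 3 ≤ HML.expr φ 2 from
    H (sizeOf φ) φ le_rfl
  intro n
  induction n with
  | zero =>
    intro φ h
    cases φ <;> simp at h
  | succ n ih =>
    intro φ h
    cases φ with
    | obs a ψ =>
      rw [expr_obs, expr_obs]
      have hs : sizeOf ψ ≤ n := by
        have := HML.obs.sizeOf_spec (Act := Act) a ψ
        omega
      simpa using ih ψ hs
    | conj poss negs =>
      have hsz : ∀ ψ : HML Act, ψ ∈ poss ∨ ψ ∈ negs → sizeOf ψ ≤ n := by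
        rintro ψ (hψ | hψ) <;>
        · have h1 := List.sizeOf_lt_of_mem hψ
          have h2 := HML.conj.sizeOf_spec (Act := Act) poss negs
          omega
      have h32 : ∀ v ∈ clE poss negs, v 3 ≤ v 2 := by
        intro v hv
        rcases mem_clE.1 hv with ⟨ψ, hψ, rfl⟩ | ⟨ψ, hψ, rfl⟩
        · exact ih ψ (hsz ψ (Or.inl hψ))
        · show HML.expr ψ 3 + (if (3:Fin 6) = 5 then 1 else 0) ≤
            HML.expr ψ 2 + (if (2:Fin 6) = 5 then 1 else 0)
          simpa using ih ψ (hsz ψ (Or.inr hψ))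
      rw [expr_conj, expr_conj]
      rw [if_neg (by decide), if_neg (by decide), if_pos rfl,
        if_neg (by decide), if_pos rfl]
      refine max_le ?_ ?_
      · exact le_trans (supErase_le_listMax _) (le_max_left _ _)
      · refine le_trans ?_ (le_max_right _ _)
        rw [listMax_le_iff]
        rintro a ha
        obtain ⟨v, hv, rfl⟩ := List.mem_map.1 ha
        exact le_trans (h32 v hv) (le_listMax_of_mem (List.mem_map.2 ⟨v, hv, rfl⟩))

end Dir1Helpers
section Direction1

variable {P Act : Type} {step : P → Act → P → Prop}

theorem formula_win (φ : HML Act) (p : P) (Q : Set P)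
    (hsat : HML.sat step φ p) (hQ : ∀ q ∈ Q, ¬ HML.sat step φ q) :
    AttackerWins (specGame step) (SpecPos.att p Q) (HML.expr φ).toE := by
  suffices H : ∀ (n : ℕ) (φ : HML Act) (p : P) (Q : Set P), sizeOf φ ≤ n →
      HML.sat step φ p → (∀ q ∈ Q, ¬ HML.sat step φ q) →
      AttackerWins (specGame step) (SpecPos.att p Q) (HML.expr φ).toE from
    H (sizeOf φ) φ p Q le_rfl hsat hQ
  clear hsat hQ φ p Q
  intro n
  induction n with
  | zero => intro φ p Q h; cases φ <;> simp at h
  | succ n ih =>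
    intro φ p Q hn hp hQ
    cases φ with
    | obs a ψ =>
      simp only [HML.sat] at hp
      obtain ⟨p', hstep, hp'⟩ := hp
      have hs : sizeOf ψ ≤ n := by
        have := HML.obs.sizeOf_spec (Act := Act) a ψ; omega
      have h0 : HML.expr (.obs a ψ) 0 ≠ 0 := by
        rw [expr_obs]; simp
      have hres : dObs (HML.expr (.obs a ψ)) = HML.expr ψ := by
        funext k
        fin_cases k
        · show HML.expr (.obs a ψ) 0 - 1 = HML.expr ψ 0
          rw [expr_obs]; simp
        · show HML.expr (.obs a ψ) 1 = HML.expr ψ 1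
          rw [expr_obs]; simp
        · show HML.expr (.obs a ψ) 2 = HML.expr ψ 2
          rw [expr_obs]; simp
        · show HML.expr (.obs a ψ) 3 = HML.expr ψ 3
          rw [expr_obs]; simp
        · show HML.expr (.obs a ψ) 4 = HML.expr ψ 4
          rw [expr_obs]; simp
        · show HML.expr (.obs a ψ) 5 = HML.expr ψ 5
          rw [expr_obs]; simp
      refine AttackerWins.attack (e' := (HML.expr ψ).toE) (specGame_not_def_att p Q)
        (SpecMove.obs (Q := Q) hstep) ?_ ?_
      · show applyUpdE (HML.expr (.obs a ψ)).toE uObs = some ((HML.expr ψ).toE)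
        rw [applyUpdE_toE, applyUpdN_uObs, if_pos h0, Option.map_some, hres]
      · refine ih ψ p' _ hs hp' ?_
        rintro q' ⟨q, hq, hsq⟩ hsatq'
        refine hQ q hq ?_
        rw [HML.sat]
        exact ⟨q', hsq, hsatq'⟩
    | conj poss negs =>
      classical
      simp only [HML.sat] at hp
      obtain ⟨hpos, hneg⟩ := hp
      have hE1 : HML.expr (HML.conj poss negs) 1 ≠ 0 := by
        have := expr_conj_one_pos (Act := Act) poss negs; omega
      have hsz : ∀ ψ : HML Act, ψ ∈ poss ∨ ψ ∈ negs → sizeOf ψ ≤ n := by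
        rintro ψ (hψ | hψ) <;>
        · have h1 := List.sizeOf_lt_of_mem hψ
          have h2 := HML.conj.sizeOf_spec (Act := Act) poss negs
          omega
      -- winning an answered conjunct via a negative clause
      have negWin : ∀ q, q ∈ Q → ∀ ψ ∈ negs, HML.sat step ψ q →
          AttackerWins (specGame step) (SpecPos.attConj p q)
            ((dAns (dCnj (HML.expr (HML.conj poss negs)))).toE) := by
        intro q hq ψ hψ hsq
        have hpψ : ¬ HML.sat step ψ p := hneg ψ hψ
        have hpq : p ≠ q := fun h => hpψ (h ▸ hsq)
        have h5 : HML.expr ψ 5 + 1 ≤ HML.expr (HML.conj poss negs) 5 := by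
          simpa using le_expr_conj_of_neg (poss := poss) hψ 5
        have h5' : dAns (dCnj (HML.expr (HML.conj poss negs))) 5 ≠ 0 := by
          show HML.expr (HML.conj poss negs) 5 ≠ 0
          omega
        refine AttackerWins.attack (e' := (dNeg (dAns (dCnj (HML.expr (HML.conj poss negs))))).toE)
          (specGame_not_def_attConj p q) (SpecMove.negDecision hpq) ?_ ?_
        · show applyUpdE _ ((specGame step).weight (SpecPos.attConj p q) (SpecPos.att q {p}))
            = some ((dNeg (dAns (dCnj (HML.expr (HML.conj poss negs))))).toE)
          rw [show (specGame step).weight (SpecPos.attConj p q) (SpecPos.att q {p}) =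
              specWeight (SpecPos.attConj p q) (SpecPos.att q {p}) from rfl,
            specWeight_negDec p q q {p} hpq, applyUpdE_toE, applyUpdN_uNeg, if_pos h5',
            Option.map_some]
        · refine AttackerWins.mono (ih ψ q {p} (hsz ψ (Or.inr hψ)) hsq ?_) ?_
          · intro x hx
            rw [Set.mem_singleton_iff] at hx
            subst hx
            exact hpψ
          · have c0 : HML.expr ψ 0 ≤ HML.expr (HML.conj poss negs) 0 := by
              simpa using le_expr_conj_of_neg (poss := poss) hψ 0
            have c1 : HML.expr ψ 1 + 1 ≤ HML.expr (HML.conj poss negs) 1 :=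
              expr_conj_one_clause (Or.inr hψ)
            have c2 : HML.expr ψ 2 ≤ HML.expr (HML.conj poss negs) 2 := by
              simpa using le_expr_conj_of_neg (poss := poss) hψ 2
            have c3 : HML.expr ψ 3 ≤ HML.expr (HML.conj poss negs) 3 := by
              simpa using le_expr_conj_of_neg (poss := poss) hψ 3
            have c4 : HML.expr ψ 4 ≤ HML.expr (HML.conj poss negs) 4 := by
              simpa using le_expr_conj_of_neg (poss := poss) hψ 4
            refine le_energy_of_components ?_ ?_ ?_ ?_ ?_ ?_
            · show HML.expr ψ 0 ≤ min (HML.expr (HML.conj poss negs) 0)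
                (HML.expr (HML.conj poss negs) 4)
              exact le_min c0 (expr_conj_four_clause hψ)
            · show HML.expr ψ 1 ≤ HML.expr (HML.conj poss negs) 1 - 1
              omega
            · exact c2
            · show HML.expr ψ 3 ≤ min (HML.expr (HML.conj poss negs) 2)
                (HML.expr (HML.conj poss negs) 3)
              exact le_min (le_trans (expr_three_le_two ψ) c2) c3
            · exact c4
            · show HML.expr ψ 5 ≤ HML.expr (HML.conj poss negs) 5 - 1
              omega
      by_cases hps : poss = []
      · subst hps
        refine AttackerWins.attack (e' := (dCnj (HML.expr (HML.conj [] negs))).toE)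
          (specGame_not_def_att p Q)
          (SpecMove.conjChallenge (Qs := ∅) (Set.empty_subset Q)) ?_ ?_
        · show applyUpdE _ uConj = some ((dCnj (HML.expr (HML.conj [] negs))).toE)
          rw [applyUpdE_toE, applyUpdN_uConj, if_pos hE1, Option.map_some]
        · refine AttackerWins.defend (specGame_def_defp _ _ _) ?_ ?_
          · intro g' hm
            have hm' : SpecMove step (SpecPos.defp p (Q \ ∅) ∅) g' := hm
            cases hm' with
            | conjRevival h => exact absurd rfl h
            | conjAnswer hq =>
              rw [show (specGame step).weight (SpecPos.defp p (Q \ ∅) ∅)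
                  (SpecPos.attConj p _) = uAnswer from rfl, applyUpdE_toE, applyUpdN_uAnswer]
              simp
          · intro g' e' hm hupd
            have hm' : SpecMove step (SpecPos.defp p (Q \ ∅) ∅) g' := hm
            cases hm' with
            | conjRevival h => exact absurd rfl h
            | @conjAnswer _ q _ _ hq =>
              rw [show (specGame step).weight (SpecPos.defp p (Q \ ∅) ∅)
                  (SpecPos.attConj p q) = uAnswer from rfl, applyUpdE_toE,
                applyUpdN_uAnswer, Option.map_some] at hupd
              obtain rfl := Option.some.inj hupd
              have hqQ : q ∈ Q := hq.1
              have hfail := hQ q hqQ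
              simp only [HML.sat] at hfail
              have hex : ∃ ψ ∈ negs, HML.sat step ψ q := by
                by_contra hcon
                push_neg at hcon
                exact hfail ⟨fun _ h => absurd h List.not_mem_nil, hcon⟩
              obtain ⟨ψ, hψ, hsq⟩ := hex
              exact negWin q hqQ ψ hψ hsq
      · obtain ⟨ψr, hψr, hmax⟩ := exists_max_depth hps
        refine AttackerWins.attack (e' := (dCnj (HML.expr (HML.conj poss negs))).toE)
          (specGame_not_def_att p Q)
          (SpecMove.conjChallenge (Qs := {q ∈ Q | ¬ HML.sat step ψr q})
            (fun q hq => hq.1)) ?_ ?_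
        · show applyUpdE _ uConj = some ((dCnj (HML.expr (HML.conj poss negs))).toE)
          rw [applyUpdE_toE, applyUpdN_uConj, if_pos hE1, Option.map_some]
        · refine AttackerWins.defend (specGame_def_defp _ _ _) ?_ ?_
          · intro g' hm
            have hm' : SpecMove step (SpecPos.defp p
                (Q \ {q ∈ Q | ¬ HML.sat step ψr q}) {q ∈ Q | ¬ HML.sat step ψr q}) g' := hm
            cases hm' with
            | conjRevival h =>
              rw [show (specGame step).weight (SpecPos.defp p (Q \ {q ∈ Q | ¬ HML.sat step ψr q}) {q ∈ Q | ¬ HML.sat step ψr q})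
                  (SpecPos.att p {q ∈ Q | ¬ HML.sat step ψr q}) = uRevival from rfl,
                applyUpdE_toE, applyUpdN_uRevival]
              simp
            | @conjAnswer _ q _ _ hq =>
              rw [show (specGame step).weight (SpecPos.defp p (Q \ {q ∈ Q | ¬ HML.sat step ψr q}) {q ∈ Q | ¬ HML.sat step ψr q})
                  (SpecPos.attConj p q) = uAnswer from rfl,
                applyUpdE_toE, applyUpdN_uAnswer]
              simp
          · intro g' e' hm hupd
            have hm' : SpecMove step (SpecPos.defp p
                (Q \ {q ∈ Q | ¬ HML.sat step ψr q}) {q ∈ Q | ¬ HML.sat step ψr q}) g' := hm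
            cases hm' with
            | conjRevival hne =>
              rw [show (specGame step).weight (SpecPos.defp p (Q \ {q ∈ Q | ¬ HML.sat step ψr q}) {q ∈ Q | ¬ HML.sat step ψr q})
                  (SpecPos.att p {q ∈ Q | ¬ HML.sat step ψr q}) = uRevival from rfl,
                applyUpdE_toE, applyUpdN_uRevival, Option.map_some] at hupd
              obtain rfl := Option.some.inj hupd
              refine AttackerWins.mono
                (ih ψr p _ (hsz ψr (Or.inl hψr)) (hpos ψr hψr) (fun q hq => hq.2)) ?_
              refine le_energy_of_components ?_ ?_ ?_ ?_ ?_ ?_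
              · show HML.expr ψr 0 ≤ min (HML.expr (HML.conj poss negs) 0)
                  (HML.expr (HML.conj poss negs) 2)
                exact le_min (le_expr_conj_of_pos hψr 0) (expr_conj_two_clause hψr)
              · show HML.expr ψr 1 ≤ HML.expr (HML.conj poss negs) 1 - 1
                exact Nat.le_sub_one_of_lt (expr_conj_one_clause (negs := negs) (Or.inl hψr))
              · exact le_expr_conj_of_pos hψr 2
              · exact le_expr_conj_of_pos hψr 3
              · exact le_expr_conj_of_pos hψr 4
              · exact le_expr_conj_of_pos hψr 5
            | @conjAnswer _ q _ _ hq =>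
              rw [show (specGame step).weight (SpecPos.defp p (Q \ {q ∈ Q | ¬ HML.sat step ψr q}) {q ∈ Q | ¬ HML.sat step ψr q})
                  (SpecPos.attConj p q) = uAnswer from rfl,
                applyUpdE_toE, applyUpdN_uAnswer, Option.map_some] at hupd
              obtain rfl := Option.some.inj hupd
              have hqQ : q ∈ Q := hq.1
              have hsr : HML.sat step ψr q := by
                by_contra hc
                exact hq.2 ⟨hqQ, hc⟩
              have hfail := hQ q hqQ
              simp only [HML.sat] at hfail
              have hex : (∃ ψ ∈ poss, ¬ HML.sat step ψ q) ∨
                  ∃ ψ ∈ negs, HML.sat step ψ q := by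
                by_contra hcon
                push_neg at hcon
                exact hfail ⟨hcon.1, hcon.2⟩
              rcases hex with ⟨ψ, hψ, hnsq⟩ | ⟨ψ, hψ, hsq⟩
              · have hneψr : ψ ≠ ψr := fun h => hnsq (h ▸ hsr)
                refine AttackerWins.attack (e' := (dPos (dAns (dCnj (HML.expr (HML.conj poss negs))))).toE)
                  (specGame_not_def_attConj p q) SpecMove.posDecision ?_ ?_
                · show applyUpdE _ ((specGame step).weight (SpecPos.attConj p q)
                      (SpecPos.att p {q}))
                    = some ((dPos (dAns (dCnj (HML.expr (HML.conj poss negs))))).toE)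
                  rw [show (specGame step).weight (SpecPos.attConj p q) (SpecPos.att p {q}) =
                      specWeight (SpecPos.attConj p q) (SpecPos.att p {q}) from rfl,
                    specWeight_posDec p q p {q} rfl, applyUpdE_toE, applyUpdN_uPos,
                    Option.map_some]
                · refine AttackerWins.mono (ih ψ p {q} (hsz ψ (Or.inl hψ)) (hpos ψ hψ) ?_) ?_
                  · intro x hx
                    rw [Set.mem_singleton_iff] at hx
                    subst hx
                    exact hnsq
                  · refine le_energy_of_components ?_ ?_ ?_ ?_ ?_ ?_
                    · show HML.expr ψ 0 ≤ min (HML.expr (HML.conj poss negs) 0)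
                        (min (HML.expr (HML.conj poss negs) 2)
                          (HML.expr (HML.conj poss negs) 3))
                      refine le_min (le_expr_conj_of_pos hψ 0)
                        (le_min (expr_conj_two_clause hψ) ?_)
                      exact le_trans (le_supErase_of_ne hψr hmax hψ hneψr)
                        (expr_conj_three poss negs)
                    · show HML.expr ψ 1 ≤ HML.expr (HML.conj poss negs) 1 - 1
                      exact Nat.le_sub_one_of_lt (expr_conj_one_clause (negs := negs) (Or.inl hψ))
                    · exact le_expr_conj_of_pos hψ 2
                    · show HML.expr ψ 3 ≤ min (HML.expr (HML.conj poss negs) 2)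
                        (HML.expr (HML.conj poss negs) 3)
                      exact le_min (le_trans (expr_three_le_two ψ)
                        (le_expr_conj_of_pos hψ 2)) (le_expr_conj_of_pos hψ 3)
                    · exact le_expr_conj_of_pos hψ 4
                    · exact le_expr_conj_of_pos hψ 5
              · exact negWin q hqQ ψ hψ hsq

end Direction1
section Direction2

variable {P Act : Type} {step : P → Act → P → Prop}

lemma expr_obs_zero (a : Act) (ψ : HML Act) :
    HML.expr (.obs a ψ) 0 = HML.expr ψ 0 + 1 := by rw [expr_obs, if_pos rfl]

lemma expr_obs_ne (a : Act) (ψ : HML Act) (k : Fin 6) (hk : k ≠ 0) :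
    HML.expr (.obs a ψ) k = HML.expr ψ k := by rw [expr_obs, if_neg hk, Nat.add_zero]

lemma dObs_ne (e : Energy 6) (k : Fin 6) (hk : k ≠ 0) : dObs e k = e k := if_neg hk

/-- Attacker-position statement: a formula distinguishing `p` from `Q` within budget. -/
def SAtt (step : P → Act → P → Prop) (p : P) (Q : Set P) (en : Energy 6) : Prop :=
  ∃ φ : HML Act, (∀ k, HML.expr φ k ≤ en k) ∧ HML.sat step φ p ∧
    ∀ q ∈ Q, ¬ HML.sat step φ q

/-- Clause-position statement. -/
def SConj (step : P → Act → P → Prop) (p q : P) (en : Energy 6) : Prop :=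
  (∃ φ : HML Act, (∀ k, HML.expr φ k ≤ dPos en k) ∧ HML.sat step φ p ∧
    ¬ HML.sat step φ q) ∨
  (en 5 ≠ 0 ∧ ∃ φ : HML Act, (∀ k, HML.expr φ k ≤ dNeg en k) ∧ HML.sat step φ q ∧
    ¬ HML.sat step φ p)

/-- Defender-position statement. -/
def SDef (step : P → Act → P → Prop) (p : P) (Qd Qs : Set P) (en : Energy 6) : Prop :=
  (Qs.Nonempty → ∃ φ : HML Act, (∀ k, HML.expr φ k ≤ dRev en k) ∧ HML.sat step φ p ∧
    ∀ q ∈ Qs, ¬ HML.sat step φ q) ∧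
  (∀ q ∈ Qd, SConj step p q (dAns en))

/-- Statement at an arbitrary position. -/
def SPos (step : P → Act → P → Prop) : SpecPos P → Energy 6 → Prop
  | .att p Q => SAtt step p Q
  | .attConj p q => SConj step p q
  | .defp p Qd Qs => SDef step p Qd Qs

/-- Assembling a conjunction from the defender-position data. -/
lemma assemble [Fintype P] (p : P) (Q Qs : Set P) (en : Energy 6) (hsub : Qs ⊆ Q)
    (h1 : en 1 ≠ 0)
    (hrev : Qs.Nonempty → ∃ φ : HML Act, (∀ k, HML.expr φ k ≤ dRev (dCnj en) k) ∧
      HML.sat step φ p ∧ ∀ q ∈ Qs, ¬ HML.sat step φ q)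
    (hans : ∀ q ∈ Q \ Qs, SConj step p q (dAns (dCnj en))) :
    SAtt step p Q en := by
  classical
  have hfin : (Q \ Qs).Finite := Set.toFinite _
  set L := hfin.toFinset.toList with hL
  have hmemL : ∀ q : P, q ∈ L ↔ q ∈ Q \ Qs := by
    intro q; rw [hL, Finset.mem_toList, Set.Finite.mem_toFinset]
  have hchoice : ∀ q : P, ∃ ψ : HML Act, q ∈ Q \ Qs →
      ((HML.sat step ψ p ∧ ¬ HML.sat step ψ q ∧
          ∀ k, HML.expr ψ k ≤ dPos (dAns (dCnj en)) k) ∨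
        (en 5 ≠ 0 ∧ HML.sat step ψ q ∧ ¬ HML.sat step ψ p ∧
          ∀ k, HML.expr ψ k ≤ dNeg (dAns (dCnj en)) k)) := by
    intro q
    by_cases hq : q ∈ Q \ Qs
    · rcases hans q hq with ⟨φ, hb, hs, hn⟩ | ⟨h5, φ, hb, hs, hn⟩
      · exact ⟨φ, fun _ => Or.inl ⟨hs, hn, hb⟩⟩
      · exact ⟨φ, fun _ => Or.inr ⟨h5, hs, hn, hb⟩⟩
    · exact ⟨HML.conj [] [], fun h => absurd h hq⟩
  choose ψf hψf using hchoice
  set posC : List (HML Act) :=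
    L.filterMap (fun q => if HML.sat step (ψf q) p then some (ψf q) else none) with hposCdef
  set negC : List (HML Act) :=
    L.filterMap (fun q => if HML.sat step (ψf q) p then none else some (ψf q)) with hnegCdef
  have hposC : ∀ ψ ∈ posC, HML.sat step ψ p ∧
      ∀ k, HML.expr ψ k ≤ dPos (dAns (dCnj en)) k := by
    intro ψ hψ
    obtain ⟨q, hqL, hq⟩ := List.mem_filterMap.1 hψ
    by_cases hs : HML.sat step (ψf q) p
    · rw [if_pos hs] at hq
      obtain rfl := Option.some.inj hq
      rcases hψf q ((hmemL q).1 hqL) with ⟨_, _, h3'⟩ | ⟨_, _, h2', _⟩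
      · exact ⟨hs, h3'⟩
      · exact absurd hs h2'
    · rw [if_neg hs] at hq
      simp at hq
  have hnegC : ∀ ψ ∈ negC, ¬ HML.sat step ψ p ∧ en 5 ≠ 0 ∧
      ∀ k, HML.expr ψ k ≤ dNeg (dAns (dCnj en)) k := by
    intro ψ hψ
    obtain ⟨q, hqL, hq⟩ := List.mem_filterMap.1 hψ
    by_cases hs : HML.sat step (ψf q) p
    · rw [if_pos hs] at hq
      simp at hq
    · rw [if_neg hs] at hq
      obtain rfl := Option.some.inj hq
      rcases hψf q ((hmemL q).1 hqL) with ⟨h1', _, _⟩ | ⟨h5, _, h2', h3'⟩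
      · exact absurd h1' hs
      · exact ⟨h2', h5, h3'⟩
  have hcover : ∀ q ∈ Q \ Qs,
      (ψf q ∈ posC ∧ ¬ HML.sat step (ψf q) q) ∨
      (ψf q ∈ negC ∧ HML.sat step (ψf q) q) := by
    intro q hq
    by_cases hs : HML.sat step (ψf q) p
    · refine Or.inl ⟨List.mem_filterMap.2 ⟨q, (hmemL q).2 hq, by rw [if_pos hs]⟩, ?_⟩
      rcases hψf q hq with ⟨_, h2', _⟩ | ⟨_, _, h2', _⟩
      · exact h2'
      · exact absurd hs h2'
    · refine Or.inr ⟨List.mem_filterMap.2 ⟨q, (hmemL q).2 hq, by rw [if_neg hs]⟩, ?_⟩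
      rcases hψf q hq with ⟨h1', _, _⟩ | ⟨_, h1', _, _⟩
      · exact absurd h1' hs
      · exact h1'
  have hb_pos : ∀ ψ ∈ posC, HML.expr ψ 0 ≤ en 0 ∧ HML.expr ψ 0 ≤ en 2 ∧
      HML.expr ψ 0 ≤ en 3 ∧ HML.expr ψ 1 < en 1 ∧ HML.expr ψ 2 ≤ en 2 ∧
      HML.expr ψ 3 ≤ en 3 ∧ HML.expr ψ 4 ≤ en 4 ∧ HML.expr ψ 5 ≤ en 5 := by
    intro ψ hψ
    obtain ⟨_, hb⟩ := hposC ψ hψ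
    have b0 : HML.expr ψ 0 ≤ min (en 0) (min (en 2) (en 3)) := hb 0
    have b1 : HML.expr ψ 1 ≤ en 1 - 1 := hb 1
    have b2 : HML.expr ψ 2 ≤ en 2 := hb 2
    have b3 : HML.expr ψ 3 ≤ min (en 2) (en 3) := hb 3
    have b4 : HML.expr ψ 4 ≤ en 4 := hb 4
    have b5 : HML.expr ψ 5 ≤ en 5 := hb 5
    rw [le_min_iff, le_min_iff] at b0
    rw [le_min_iff] at b3
    exact ⟨b0.1, b0.2.1, b0.2.2, by omega, b2, b3.2, b4, b5⟩
  have hb_neg : ∀ ψ ∈ negC, HML.expr ψ 0 ≤ en 0 ∧ HML.expr ψ 0 ≤ en 4 ∧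
      HML.expr ψ 1 < en 1 ∧ HML.expr ψ 2 ≤ en 2 ∧ HML.expr ψ 3 ≤ en 3 ∧
      HML.expr ψ 4 ≤ en 4 ∧ HML.expr ψ 5 + 1 ≤ en 5 := by
    intro ψ hψ
    obtain ⟨_, h5, hb⟩ := hnegC ψ hψ
    have b0 : HML.expr ψ 0 ≤ min (en 0) (en 4) := hb 0
    have b1 : HML.expr ψ 1 ≤ en 1 - 1 := hb 1
    have b2 : HML.expr ψ 2 ≤ en 2 := hb 2
    have b3 : HML.expr ψ 3 ≤ min (en 2) (en 3) := hb 3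
    have b4 : HML.expr ψ 4 ≤ en 4 := hb 4
    have b5 : HML.expr ψ 5 ≤ en 5 - 1 := hb 5
    rw [le_min_iff] at b0 b3
    exact ⟨b0.1, b0.2, by omega, b2, b3.2, b4, by omega⟩
  by_cases hQsne : Qs.Nonempty
  · obtain ⟨φr, hbr, hsr, hnr⟩ := hrev hQsne
    refine ⟨HML.conj (φr :: posC) negC, ?_, ?_, ?_⟩
    · refine expr_conj_le (Nat.one_le_iff_ne_zero.2 h1) ?_ ?_ ?_
      · rintro ψ hψ
        rcases List.mem_cons.1 hψ with rfl | hψ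
        · have b0 : HML.expr ψ 0 ≤ min (en 0) (en 2) := hbr 0
          have b1 : HML.expr ψ 1 ≤ en 1 - 1 := hbr 1
          have b2 : HML.expr ψ 2 ≤ en 2 := hbr 2
          have b3 : HML.expr ψ 3 ≤ en 3 := hbr 3
          have b4 : HML.expr ψ 4 ≤ en 4 := hbr 4
          have b5 : HML.expr ψ 5 ≤ en 5 := hbr 5
          rw [le_min_iff] at b0
          exact ⟨b0.1, b0.2, by omega, b2, b3, b4, b5⟩
        · obtain ⟨c0, c2', _, c1, c2, c3, c4, c5⟩ := hb_pos ψ hψ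
          exact ⟨c0, c2', c1, c2, c3, c4, c5⟩
      · rintro ψ hψ
        exact (hb_pos ψ hψ).2.2.1
      · rintro ψ hψ
        exact hb_neg ψ hψ
    · rw [HML.sat]
      constructor
      · rintro ψ hψ
        rcases List.mem_cons.1 hψ with rfl | hψ
        · exact hsr
        · exact (hposC ψ hψ).1
      · rintro ψ hψ
        exact (hnegC ψ hψ).1
    · rintro q hq hsatq
      rw [HML.sat] at hsatq
      by_cases hqs : q ∈ Qs
      · exact hnr q hqs (hsatq.1 φr (List.mem_cons_self))
      · rcases hcover q ⟨hq, hqs⟩ with ⟨hmem, hns⟩ | ⟨hmem, hs⟩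
        · exact hns (hsatq.1 (ψf q) (List.mem_cons_of_mem _ hmem))
        · exact hsatq.2 (ψf q) hmem hs
  · refine ⟨HML.conj posC negC, ?_, ?_, ?_⟩
    · refine expr_conj_le (Nat.one_le_iff_ne_zero.2 h1) ?_ ?_ ?_
      · rintro ψ hψ
        obtain ⟨c0, c2', _, c1, c2, c3, c4, c5⟩ := hb_pos ψ hψ
        exact ⟨c0, c2', c1, c2, c3, c4, c5⟩
      · rintro ψ hψ
        exact (hb_pos ψ (List.mem_of_mem_tail hψ)).2.2.1
      · rintro ψ hψ
        exact hb_neg ψ hψ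
    · rw [HML.sat]
      exact ⟨fun ψ hψ => (hposC ψ hψ).1, fun ψ hψ => (hnegC ψ hψ).1⟩
    · rintro q hq hsatq
      rw [HML.sat] at hsatq
      have hqs : q ∉ Qs := fun hc => hQsne ⟨q, hc⟩
      rcases hcover q ⟨hq, hqs⟩ with ⟨hmem, hns⟩ | ⟨hmem, hs⟩
      · exact hns (hsatq.1 (ψf q) hmem)
      · exact hsatq.2 (ψf q) hmem hs

end Direction2
section Direction2Main

variable {P Act : Type} {step : P → Act → P → Prop}

theorem win_formula [Fintype P] {g : (specGame step).Pos} {e : EnergyE 6}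
    (h : AttackerWins (specGame step) g e) :
    ∀ en : Energy 6, e = en.toE → SPos step g en := by
  induction h with
  | @attack g g' e e' hdef hmove hupd _ ihw =>
    intro en he
    subst he
    have hm' : SpecMove step g g' := hmove
    cases hm' with
    | @obs p p' Q a hstep =>
      rw [show (specGame step).weight (SpecPos.att p Q) (SpecPos.att p' (stepSet step Q a))
          = uObs from rfl, applyUpdE_toE, applyUpdN_uObs] at hupd
      by_cases h0 : en 0 ≠ 0
      · rw [if_pos h0, Option.map_some] at hupd
        obtain rfl := Option.some.inj hupd
        obtain ⟨φ', hb, hs, hQ'⟩ := ihw (dObs en) rfl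
        show SAtt step p Q en
        refine ⟨HML.obs a φ', ?_, ?_, ?_⟩
        · intro k
          by_cases hk : k = 0
          · subst hk
            rw [expr_obs_zero]
            have hb0 : HML.expr φ' 0 ≤ en 0 - 1 := hb 0
            omega
          · rw [expr_obs_ne a φ' k hk]
            have := hb k
            rwa [dObs_ne en k hk] at this
        · rw [HML.sat]
          exact ⟨p', hstep, hs⟩
        · intro q hq hsatq
          rw [HML.sat] at hsatq
          obtain ⟨q', hsq, hsatq'⟩ := hsatq
          exact hQ' q' ⟨q, hq, hsq⟩ hsatq'
      · rw [if_neg h0] at hupd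
        simp at hupd
    | @conjChallenge p Q Qs hsub =>
      rw [show (specGame step).weight (SpecPos.att p Q) (SpecPos.defp p (Q \ Qs) Qs)
          = uConj from rfl, applyUpdE_toE, applyUpdN_uConj] at hupd
      by_cases h1 : en 1 ≠ 0
      · rw [if_pos h1, Option.map_some] at hupd
        obtain rfl := Option.some.inj hupd
        obtain ⟨hrev, hans⟩ := ihw (dCnj en) rfl
        exact assemble p Q Qs en hsub h1 hrev hans
      · rw [if_neg h1] at hupd
        simp at hupd
    | conjRevival h => exact absurd (specGame_def_defp _ _ _) hdef
    | conjAnswer h => exact absurd (specGame_def_defp _ _ _) hdef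
    | @posDecision p q =>
      rw [show (specGame step).weight (SpecPos.attConj p q) (SpecPos.att p {q})
          = specWeight (SpecPos.attConj p q) (SpecPos.att p {q}) from rfl,
        specWeight_posDec p q p {q} rfl, applyUpdE_toE, applyUpdN_uPos,
        Option.map_some] at hupd
      obtain rfl := Option.some.inj hupd
      obtain ⟨φ, hb, hs, hq⟩ := ihw (dPos en) rfl
      exact Or.inl ⟨φ, hb, hs, hq q rfl⟩
    | @negDecision p q hpq =>
      rw [show (specGame step).weight (SpecPos.attConj p q) (SpecPos.att q {p})
          = specWeight (SpecPos.attConj p q) (SpecPos.att q {p}) from rfl,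
        specWeight_negDec p q q {p} hpq, applyUpdE_toE, applyUpdN_uNeg] at hupd
      by_cases h5 : en 5 ≠ 0
      · rw [if_pos h5, Option.map_some] at hupd
        obtain rfl := Option.some.inj hupd
        obtain ⟨φ, hb, hs, hp'⟩ := ihw (dNeg en) rfl
        exact Or.inr ⟨h5, φ, hb, hs, hp' p rfl⟩
      · rw [if_neg h5] at hupd
        simp at hupd
  | @defend g e hdef hall _ ihw =>
    intro en he
    subst he
    have hdef' : ∃ p Q Qs, g = SpecPos.defp p Q Qs := hdef
    obtain ⟨p, Qd, Qs, rfl⟩ := hdef'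
    show SDef step p Qd Qs en
    constructor
    · intro hQs
      have hmv : (specGame step).move (SpecPos.defp p Qd Qs) (SpecPos.att p Qs) :=
        SpecMove.conjRevival (Set.nonempty_iff_ne_empty.1 hQs)
      have hupd : applyUpdE en.toE ((specGame step).weight (SpecPos.defp p Qd Qs)
          (SpecPos.att p Qs)) = some ((dRev en).toE) := by
        rw [show (specGame step).weight (SpecPos.defp p Qd Qs) (SpecPos.att p Qs)
            = uRevival from rfl, applyUpdE_toE, applyUpdN_uRevival, Option.map_some]
      exact ihw _ _ hmv hupd (dRev en) rfl
    · intro q hq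
      have hmv : (specGame step).move (SpecPos.defp p Qd Qs) (SpecPos.attConj p q) :=
        SpecMove.conjAnswer hq
      have hupd : applyUpdE en.toE ((specGame step).weight (SpecPos.defp p Qd Qs)
          (SpecPos.attConj p q)) = some ((dAns en).toE) := by
        rw [show (specGame step).weight (SpecPos.defp p Qd Qs) (SpecPos.attConj p q)
            = uAnswer from rfl, applyUpdE_toE, applyUpdN_uAnswer, Option.map_some]
      exact ihw _ _ hmv hupd (dAns en) rfl

end Direction2Main
/-- **Correctness of the spectroscopy energy game** (Theorem 1):
For a finite LTS, no HML formula `φ` with `expr φ ≤ e_X` distinguishes `p` from `q`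
iff there is no energy `e ∈ ℕ^6` with `e ∈ Win_a([p,{q}]_a)` in `G△` and `e ≤ e_X`. -/
theorem spectroscopy_game_correctness {P Act : Type} [Fintype P] [Fintype Act]
    (step : P → Act → P → Prop) (p q : P) (eX : EnergyE 6) :
    (¬ ∃ φ : HML Act, φ.exprE ≤ eX ∧ distinguishes step φ p q) ↔
    (¬ ∃ e : Energy 6,
        AttackerWins (specGame step) (SpecPos.att p {q}) e.toE ∧ e.toE ≤ eX) := by
  refine not_congr ?_
  constructor
  · rintro ⟨φ, hle, hd⟩
    refine ⟨HML.expr φ, ?_, hle⟩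
    refine formula_win φ p {q} hd.1 ?_
    intro x hx
    rw [Set.mem_singleton_iff] at hx
    subst hx
    exact hd.2
  · rintro ⟨e, hw, hle⟩
    have hS : SAtt step p {q} e := win_formula hw e rfl
    obtain ⟨φ, hb, hs, hn⟩ := hS
    refine ⟨φ, ?_, hs, hn q rfl⟩
    intro k
    calc (φ.exprE k) = ((HML.expr φ k : ℕ) : ℕ∞) := rfl
      _ ≤ ((e k : ℕ) : ℕ∞) := by exact_mod_cast hb k
      _ ≤ eX k := hle k
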